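/- arXiv:1708.09196 — 4 statements merged into one kernel-verified Lean document; each statement's English description precedes it below -/
import Mathlib

section
/- (Halmos dilation) Let A be an n×n complex matrix with ‖A‖ ≤ 1. Then the 2n×2n block matrix U = [[A, (I − A A†)^{1/2}], [(I − A† A)^{1/2}, −A†]] is unitary, where (I − A A†)^{1/2} and (I − A† A)^{1/2} denote the positive semidefinite square roots of the positive semidefinite matrices I − A A† and I − A† A. -/
open Matrix
open scoped Matrix.Norms.L2Operator ComplexOrder

/-!
The whole computation of `U * Uᴴ` rests on the intertwining relation `A * S₂ = S₁ * A`. It holds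
for the squares, `A * (1 - Aᴴ * A) = (1 - A * Aᴴ) * A`, and passes to the square roots because on
matrices the square root is a polynomial: the Lagrange interpolant of `√` on the finite spectra of
`S₁ * S₁` and `S₂ * S₂`. With this relation and its adjoint, the off-diagonal blocks of `U * Uᴴ`
cancel and the diagonal ones are `A * Aᴴ + S₁ * S₁ = 1` and `S₂ * S₂ + Aᴴ * A = 1`.
-/

open Polynomial in
theorem SemiconjBy.aeval {R A : Type*} [CommSemiring R] [Semiring A] [Algebra R A] {x a b : A}
    (h : SemiconjBy x a b) (q : R[X]) : SemiconjBy x (aeval a q) (aeval b q) := by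
  induction q using Polynomial.induction_on' with
  | add p q hp hq => simpa only [map_add] using hp.add_right hq
  | monomial k r =>
    simpa only [aeval_monomial] using
      SemiconjBy.mul_right (Algebra.commute_algebraMap_right r x) (h.pow_right k)

theorem SemiconjBy.cfc {R A : Type*} {p : A → Prop} [Field R] [StarRing R] [MetricSpace R]
    [IsTopologicalSemiring R] [ContinuousStar R] [TopologicalSpace A] [Ring A] [StarRing A]
    [Algebra R A] [ContinuousFunctionalCalculus R A p] {x a b : A} (h : SemiconjBy x a b)
    (ha : p a) (hb : p b) (ha_fin : (spectrum R a).Finite) (hb_fin : (spectrum R b).Finite)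
    (f : R → R) : SemiconjBy x (cfc f a) (cfc f b) := by
  classical
  set s := (ha_fin.union hb_fin).toFinset
  set q := Lagrange.interpolate s id f
  have hq : ∀ t ∈ s, q.eval t = f t := fun t ht =>
    Lagrange.eval_interpolate_at_node f (Set.injOn_id _) ht
  have hqa : _root_.cfc f a = Polynomial.aeval a q := by
    rw [← cfc_polynomial q a]
    exact cfc_congr fun t ht => (hq t (by simp [s, ht])).symm
  have hqb : _root_.cfc f b = Polynomial.aeval b q := by
    rw [← cfc_polynomial q b]
    exact cfc_congr fun t ht => (hq t (by simp [s, ht])).symm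
  rw [hqa, hqb]
  exact h.aeval q

section

open scoped MatrixOrder

variable {𝕜 n : Type*} [RCLike 𝕜] [Fintype n] [DecidableEq n]

theorem Matrix.PosSemidef.eq_cfc_sqrt_mul_self {S : Matrix n n 𝕜} (hS : S.PosSemidef) :
    S = cfc Real.sqrt (S * S) := by
  rw [← cfcₙ_eq_cfc, ← CFC.sqrt_eq_real_sqrt (S * S) (IsSelfAdjoint.mul_self_nonneg hS.1),
    CFC.sqrt_mul_self S hS.nonneg]

theorem Matrix.PosSemidef.semiconjBy_of_semiconjBy_mul_self {X S T : Matrix n n 𝕜}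
    (hS : S.PosSemidef) (hT : T.PosSemidef) (h : SemiconjBy X (S * S) (T * T)) :
    SemiconjBy X S T := by
  rw [hS.eq_cfc_sqrt_mul_self, hT.eq_cfc_sqrt_mul_self]
  exact h.cfc (IsSelfAdjoint.mul_self_nonneg hS.1).isSelfAdjoint
    (IsSelfAdjoint.mul_self_nonneg hT.1).isSelfAdjoint finite_real_spectrum finite_real_spectrum _

end

theorem halmos_dilation_unitary_general {n : ℕ} (A : Matrix (Fin n) (Fin n) ℂ)
    (S₁ S₂ : Matrix (Fin n) (Fin n) ℂ)
    (hS₁ : S₁.PosSemidef) (hS₁sq : S₁ * S₁ = 1 - A * Aᴴ)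
    (hS₂ : S₂.PosSemidef) (hS₂sq : S₂ * S₂ = 1 - Aᴴ * A) :
    Matrix.fromBlocks A S₁ S₂ (-Aᴴ) * (Matrix.fromBlocks A S₁ S₂ (-Aᴴ))ᴴ = 1 := by
  have hAS : A * S₂ = S₁ * A := hS₂.semiconjBy_of_semiconjBy_mul_self hS₁ <| by
    rw [SemiconjBy, hS₁sq, hS₂sq]; noncomm_ring
  have hSA : S₂ * Aᴴ = Aᴴ * S₁ := by
    simpa only [conjTranspose_mul, hS₁.1.eq, hS₂.1.eq] using congrArg conjTranspose hAS
  rw [fromBlocks_conjTranspose, fromBlocks_multiply, ← fromBlocks_one, hS₁.1.eq, hS₂.1.eq]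
  congr 1 <;>
    simp only [conjTranspose_neg, conjTranspose_conjTranspose, hS₁sq, hS₂sq, hAS, hSA] <;>
    noncomm_ring

/-- (Halmos dilation) Let `A` be an `n × n` complex contraction, `‖A‖ ≤ 1`.  If `S₁` and
`S₂` are the positive semidefinite square roots of `1 - A * Aᴴ` and `1 - Aᴴ * A`
respectively, then the `2n × 2n` block matrix `[[A, S₁], [S₂, -Aᴴ]]` is unitary. -/
theorem halmos_dilation_unitary {n : ℕ} (A : Matrix (Fin n) (Fin n) ℂ) (hA : ‖A‖ ≤ 1)
    (S₁ S₂ : Matrix (Fin n) (Fin n) ℂ)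
    (hS₁ : S₁.PosSemidef) (hS₁sq : S₁ * S₁ = 1 - A * Aᴴ)
    (hS₂ : S₂.PosSemidef) (hS₂sq : S₂ * S₂ = 1 - Aᴴ * A) :
    Matrix.fromBlocks A S₁ S₂ (-Aᴴ) * (Matrix.fromBlocks A S₁ S₂ (-Aᴴ))ᴴ = 1 :=
  halmos_dilation_unitary_general A S₁ S₂ hS₁ hS₁sq hS₂ hS₂sq
end

section
/- Let A be a k×k complex contraction (‖A‖ ≤ 1) and set m = rank(I − A† A). Then the minimal dimension n for which A occurs as a principal submatrix of an n×n unitary matrix is n = k + m: there exists a (k+m)×(k+m) unitary matrix having A as a principal submatrix, and no n×n unitary matrix with n < k + m has A as a principal submatrix. -/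
open Matrix
open scoped Matrix.Norms.L2Operator

/-!
If `A` is the principal submatrix of a unitary `U` on the index set `S`, the columns of `U`
indexed by `S` are orthonormal, so `1 - Aᴴ * A = Bᴴ * B` for the `(n - k) × k` block `B` of those
columns outside `S`; hence `rank (1 - Aᴴ * A) ≤ n - k`.

Conversely, `1 - Aᴴ * A` is positive semidefinite, so it is `Bᴴ * B` for a square `B`, and an
orthonormal basis of the column space of `B` turns it into the Gram matrix of `k` vectors `u j`
in `ℂ^m`, `m = rank (1 - Aᴴ * A)`. The vectors `(A e_j, u j)` are then orthonormal in
`ℂ^(k + m)`; extending them to an orthonormal basis gives a unitary whose top-left block is `A`.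
-/

namespace Matrix

section Gram

variable {𝕜 : Type*} [RCLike 𝕜]

theorem gram_toLp_col {m n : Type*} [Fintype m] (B : Matrix m n 𝕜) :
    gram 𝕜 (fun j ↦ WithLp.toLp 2 (B.col j)) = Bᴴ * B := by
  ext i j
  simp [gram_apply, PiLp.inner_apply, mul_apply, mul_comm]

theorem exists_gram_eq_conjTranspose_mul_self {m n : Type*} [Fintype m] [Fintype n]
    (B : Matrix m n 𝕜) : ∃ u : n → EuclideanSpace 𝕜 (Fin B.rank), gram 𝕜 u = Bᴴ * B := by
  let w j : EuclideanSpace 𝕜 m := WithLp.toLp 2 (B.col j)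
  let W := Submodule.span 𝕜 (Set.range w)
  have hW : Module.finrank 𝕜 W = B.rank := by
    rw [rank_eq_finrank_span_cols, ← (WithLp.linearEquiv 2 𝕜 (m → 𝕜)).symm.finrank_map_eq,
      ← Submodule.span_image, ← Set.range_comp]
    rfl
  let b := (stdOrthonormalBasis 𝕜 W).reindex (finCongr hW)
  refine ⟨fun j ↦ b.repr ⟨w j, Submodule.subset_span ⟨j, rfl⟩⟩, ?_⟩
  ext i j
  rw [gram_apply, LinearIsometryEquiv.inner_map_map, ← gram_toLp_col]
  rfl

theorem exists_unitary_submatrix_castAdd_eq {k m : ℕ} (A : Matrix (Fin k) (Fin k) 𝕜)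
    (u : Fin k → EuclideanSpace 𝕜 (Fin m)) (h : Aᴴ * A + gram 𝕜 u = 1) :
    ∃ U : Matrix (Fin (k + m)) (Fin (k + m)) 𝕜,
      U * Uᴴ = 1 ∧ U.submatrix (Fin.castAdd m) (Fin.castAdd m) = A := by
  let v j : EuclideanSpace 𝕜 (Fin (k + m)) := WithLp.toLp 2 (Fin.append (A.col j) (u j).ofLp)
  have hv : Orthonormal 𝕜 v := by
    rw [← gram_eq_one_iff_orthonormal, ← h, ← gram_toLp_col]
    ext i j
    simp [v, gram_apply, PiLp.inner_apply, Fin.sum_univ_add]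
  have hv_castAdd : Orthonormal 𝕜 ((Set.range (Fin.castAdd m)).domRestrict (Fin.append v 0)) := by
    rw [orthonormal_iff_ite]
    rintro ⟨_, i, rfl⟩ ⟨_, j, rfl⟩
    simpa [Subtype.ext_iff] using orthonormal_iff_ite.mp hv i j
  obtain ⟨b, hb⟩ := hv_castAdd.exists_orthonormalBasis_extension_of_card_eq (by simp)
  refine ⟨(EuclideanSpace.basisFun _ 𝕜).toBasis.toMatrix b,
    OrthonormalBasis.toMatrix_orthonormalBasis_self_mul_conjTranspose _ _, ?_⟩
  ext i j
  simp [Module.Basis.toMatrix_apply, hb _ ⟨j, rfl⟩, v]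

end Gram

section Complex

open scoped MatrixOrder ComplexOrder

variable {n : Type*} [Fintype n] [DecidableEq n]

theorem posSemidef_one_sub_conjTranspose_mul_self_of_norm_le_one {A : Matrix n n ℂ}
    (hA : ‖A‖ ≤ 1) : (1 - Aᴴ * A).PosSemidef := by
  rw [← nonneg_iff_posSemidef, sub_nonneg, ← star_eq_conjTranspose]
  refine (CStarAlgebra.norm_le_one_iff_of_nonneg _ (star_mul_self_nonneg A)).mp ?_
  rw [CStarRing.norm_star_mul_self]
  nlinarith [norm_nonneg A]

theorem PosSemidef.exists_gram_eq {M : Matrix n n ℂ} (hM : M.PosSemidef) :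
    ∃ u : n → EuclideanSpace ℂ (Fin M.rank), gram ℂ u = M := by
  obtain ⟨B, rfl⟩ := CStarAlgebra.nonneg_iff_eq_star_mul_self.mp hM.nonneg
  rw [star_eq_conjTranspose, rank_conjTranspose_mul_self]
  exact exists_gram_eq_conjTranspose_mul_self B

end Complex

section Compression

variable {R ι κ : Type*} [Fintype ι] [Fintype κ]

theorem conjTranspose_mul_self_submatrix_add_compl [Semiring R] [StarRing R] (U : Matrix ι ι R)
    (f : κ ↪ ι) [DecidablePred (· ∈ Set.range f)] :
    (U.submatrix f f)ᴴ * U.submatrix f f +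
        (U.submatrix (Subtype.val : {i // i ∉ Set.range f} → ι) f)ᴴ *
          U.submatrix (Subtype.val : {i // i ∉ Set.range f} → ι) f =
      (Uᴴ * U).submatrix f f := by
  ext i j
  simp only [add_apply, mul_apply, submatrix_apply, conjTranspose_apply]
  rw [← Fintype.sum_subtype_add_sum_subtype (· ∈ Set.range f)]
  congr 1
  exact Fintype.sum_equiv (Equiv.ofInjective f f.injective) _ _ fun _ ↦ rfl

theorem rank_one_sub_conjTranspose_mul_self_submatrix_add_card_le [CommRing R] [StarRing R]
    [StrongRankCondition R] [DecidableEq ι] [DecidableEq κ] {U : Matrix ι ι R}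
    (hU : Uᴴ * U = 1) (f : κ ↪ ι) :
    (1 - (U.submatrix f f)ᴴ * U.submatrix f f).rank + Fintype.card κ ≤ Fintype.card ι := by
  classical
  set B := U.submatrix (Subtype.val : {i // i ∉ Set.range f} → ι) f
  have hB : 1 - (U.submatrix f f)ᴴ * U.submatrix f f = Bᴴ * B := by
    rw [sub_eq_iff_eq_add', conjTranspose_mul_self_submatrix_add_compl, hU,
      submatrix_one_embedding]
  have hrank : (Bᴴ * B).rank ≤ Fintype.card {i // i ∉ Set.range f} :=
    (rank_mul_le_right _ _).trans (rank_le_card_height B)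
  have hcard : Fintype.card {i // i ∉ Set.range f} = Fintype.card ι - Fintype.card κ := by
    rw [Fintype.card_subtype_compl, Set.card_range_of_injective f.injective]
  have := Fintype.card_le_of_embedding f
  rw [hB]
  omega

end Compression

end Matrix

/-- Let `A` be a `k × k` complex contraction and `m = rank (1 - Aᴴ * A)`.  Then the minimal
dimension `n` for which `A` occurs as a principal submatrix of an `n × n` unitary matrix is
`n = k + m`: there is a `(k + m) × (k + m)` unitary matrix having `A` as a principal
submatrix, and no `n × n` unitary matrix with `n < k + m` has `A` as a principal
submatrix. -/
theorem minimal_unitary_dilation_dimension {k : ℕ} (A : Matrix (Fin k) (Fin k) ℂ)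
    (hA : ‖A‖ ≤ 1) :
    (∃ U : Matrix (Fin (k + (1 - Aᴴ * A).rank)) (Fin (k + (1 - Aᴴ * A).rank)) ℂ,
        U * Uᴴ = 1 ∧ ∃ f : Fin k ↪ Fin (k + (1 - Aᴴ * A).rank), A = U.submatrix f f) ∧
    (∀ n : ℕ, n < k + (1 - Aᴴ * A).rank → ∀ U : Matrix (Fin n) (Fin n) ℂ, U * Uᴴ = 1 →
        ∀ f : Fin k ↪ Fin n, A ≠ U.submatrix f f) := by
  constructor
  · obtain ⟨u, hu⟩ := (posSemidef_one_sub_conjTranspose_mul_self_of_norm_le_one hA).exists_gram_eq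
    obtain ⟨U, hU, hUA⟩ := exists_unitary_submatrix_castAdd_eq A u (by rw [hu, add_sub_cancel])
    exact ⟨U, hU, ⟨Fin.castAdd _, Fin.castAdd_injective _ _⟩, hUA.symm⟩
  · rintro n hn U hU f rfl
    have := rank_one_sub_conjTranspose_mul_self_submatrix_add_card_le (mul_eq_one_comm.mp hU) f
    simp only [Fintype.card_fin] at this
    omega
end

section
/- Let θ_1, θ_2 be real numbers and let U be the real 2×2 matrix U = [[cos θ_1, sin θ_1], [−sin θ_2, cos θ_2]]. Then ‖U Uᵀ‖ = 1 + |sin(θ_1 − θ_2)|, and hence ‖U‖² = 1 + |sin(θ_1 − θ_2)| ≥ 1. In particular, ‖U‖ > 1 whenever sin(θ_1 − θ_2) ≠ 0, so U is a contraction only if sin(θ_1 − θ_2) = 0. -/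
/-! The rows of `U` are unit vectors with inner product `s = sin (θ₁ - θ₂)`, so
`U * Uᵀ = !![1, s; s, 1] = 1 + s • J` with `J` the coordinate swap. Since `J` is orthogonal,
`‖1 + s • J‖ ≤ 1 + |s|`, and the eigenvector `(1, ±1)` with eigenvalue `1 + |s|` gives equality.
The C⋆-identity `‖U‖ ^ 2 = ‖U * Uᵀ‖` does the rest. -/

open Matrix
open scoped Matrix.Norms.L2Operator

namespace Matrix

lemma l2_opNorm_mul_transpose_self {m n : Type*} [Fintype m] [Fintype n] [DecidableEq m]
    [DecidableEq n] (A : Matrix m n ℝ) : ‖A * Aᵀ‖ = ‖A‖ * ‖A‖ := by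
  have h := l2_opNorm_conjTranspose_mul_self Aᴴ
  rwa [conjTranspose_conjTranspose, l2_opNorm_conjTranspose,
    conjTranspose_eq_transpose_of_trivial] at h

lemma norm_le_l2_opNorm_of_mulVec_eq_smul {𝕜 n : Type*} [RCLike 𝕜] [Fintype n] [DecidableEq n]
    {A : Matrix n n 𝕜} {v : n → 𝕜} {c : 𝕜} (hv : v ≠ 0) (hAv : A *ᵥ v = c • v) :
    ‖c‖ ≤ ‖A‖ := by
  have hbound := l2_opNorm_mulVec A (WithLp.toLp 2 v)
  have hpos : 0 < ‖WithLp.toLp 2 v‖ := by simpa using hv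
  rw [WithLp.ofLp_toLp, hAv, map_smul, norm_smul] at hbound
  exact le_of_mul_le_mul_right hbound hpos

lemma l2_opNorm_swap_fin_two : ‖(!![0, 1; 1, 0] : Matrix (Fin 2) (Fin 2) ℝ)‖ = 1 := by
  refine CStarRing.norm_of_mem_unitary (Unitary.mem_iff.mpr ⟨?_, ?_⟩) <;>
    (ext i j; fin_cases i <;> fin_cases j <;> simp [mul_apply, Fin.sum_univ_two])

lemma l2_opNorm_circulant_fin_two (a b : ℝ) :
    ‖(!![a, b; b, a] : Matrix (Fin 2) (Fin 2) ℝ)‖ = |a| + |b| := by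
  apply le_antisymm
  · calc _ = ‖a • (1 : Matrix (Fin 2) (Fin 2) ℝ) + b • !![0, 1; 1, 0]‖ := by
          congr 1; ext i j; fin_cases i <;> fin_cases j <;> simp
      _ ≤ ‖a • (1 : Matrix (Fin 2) (Fin 2) ℝ)‖ + ‖b • !![(0 : ℝ), 1; 1, 0]‖ := norm_add_le _ _
      _ = |a| + |b| := by rw [norm_smul, norm_smul, norm_one, l2_opNorm_swap_fin_two]; simp
  · have hplus : ‖a + b‖ ≤ ‖(!![a, b; b, a] : Matrix (Fin 2) (Fin 2) ℝ)‖ :=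
      norm_le_l2_opNorm_of_mulVec_eq_smul (v := ![1, 1]) (by simp)
        (by ext i; fin_cases i <;> simp [add_comm])
    have hminus : ‖a - b‖ ≤ ‖(!![a, b; b, a] : Matrix (Fin 2) (Fin 2) ℝ)‖ :=
      norm_le_l2_opNorm_of_mulVec_eq_smul (v := ![1, -1]) (by simp)
        (by ext i; fin_cases i <;> simp <;> ring)
    rw [Real.norm_eq_abs] at hplus hminus
    rcases abs_cases a with ⟨ha, _⟩ | ⟨ha, _⟩ <;> rcases abs_cases b with ⟨hb, _⟩ | ⟨hb, _⟩ <;>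
      linarith [le_abs_self (a + b), neg_abs_le (a + b), le_abs_self (a - b), neg_abs_le (a - b)]

end Matrix

lemma mixing_mul_transpose (θ₁ θ₂ : ℝ) :
    (!![Real.cos θ₁, Real.sin θ₁; -Real.sin θ₂, Real.cos θ₂] : Matrix (Fin 2) (Fin 2) ℝ) *
        (!![Real.cos θ₁, Real.sin θ₁; -Real.sin θ₂, Real.cos θ₂])ᵀ =
      !![1, Real.sin (θ₁ - θ₂); Real.sin (θ₁ - θ₂), 1] := by
  ext i j
  fin_cases i <;> fin_cases j <;>
    simp [mul_apply, Fin.sum_univ_two, Real.sin_sub] <;>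
      linarith [Real.sin_sq_add_cos_sq θ₁, Real.sin_sq_add_cos_sq θ₂]

/-- For `U = [[cos θ₁, sin θ₁], [-sin θ₂, cos θ₂]]` one has
`‖U * Uᵀ‖ = 1 + |sin (θ₁ - θ₂)|`, hence `‖U‖² = 1 + |sin (θ₁ - θ₂)| ≥ 1`; in particular
`‖U‖ > 1` whenever `sin (θ₁ - θ₂) ≠ 0`, so `U` is a contraction only if
`sin (θ₁ - θ₂) = 0`. -/
theorem toy_mixing_matrix_norm (θ₁ θ₂ : ℝ) :
    ‖(!![Real.cos θ₁, Real.sin θ₁; -Real.sin θ₂, Real.cos θ₂]) *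
        (!![Real.cos θ₁, Real.sin θ₁; -Real.sin θ₂, Real.cos θ₂])ᵀ‖ =
      1 + |Real.sin (θ₁ - θ₂)| ∧
    ‖(!![Real.cos θ₁, Real.sin θ₁; -Real.sin θ₂, Real.cos θ₂] : Matrix (Fin 2) (Fin 2) ℝ)‖ ^ 2 =
      1 + |Real.sin (θ₁ - θ₂)| ∧
    1 ≤ ‖(!![Real.cos θ₁, Real.sin θ₁; -Real.sin θ₂, Real.cos θ₂] : Matrix (Fin 2) (Fin 2) ℝ)‖ ^ 2 ∧
    (Real.sin (θ₁ - θ₂) ≠ 0 →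
      1 < ‖(!![Real.cos θ₁, Real.sin θ₁; -Real.sin θ₂, Real.cos θ₂] : Matrix (Fin 2) (Fin 2) ℝ)‖) ∧
    (‖(!![Real.cos θ₁, Real.sin θ₁; -Real.sin θ₂, Real.cos θ₂] : Matrix (Fin 2) (Fin 2) ℝ)‖ ≤ 1 →
      Real.sin (θ₁ - θ₂) = 0) := by
  set U : Matrix (Fin 2) (Fin 2) ℝ := !![Real.cos θ₁, Real.sin θ₁; -Real.sin θ₂, Real.cos θ₂]
  have hUUt : ‖U * Uᵀ‖ = 1 + |Real.sin (θ₁ - θ₂)| := by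
    rw [mixing_mul_transpose, l2_opNorm_circulant_fin_two, abs_one]
  have hU : ‖U‖ ^ 2 = 1 + |Real.sin (θ₁ - θ₂)| := by
    rw [sq, ← l2_opNorm_mul_transpose_self, hUUt]
  have hgt : Real.sin (θ₁ - θ₂) ≠ 0 → 1 < ‖U‖ := fun hs => by
    rw [← one_lt_sq_iff₀ (norm_nonneg U), hU]
    simpa using hs
  refine ⟨hUUt, hU, by rw [hU]; simp, hgt, fun hle => ?_⟩
  by_contra hs
  exact (hgt hs).not_ge hle
end

section
/- (CS decomposition) Let U be an (n+m)×(n+m) unitary complex matrix partitioned into blocks U = [[U11, U12], [U21, U22]] with U11 of size n×n, U12 of size n×m, U21 of size m×n, and U22 of size m×m, and suppose m ≥ n. Then there exist n×n unitary matrices W1, Q1 and m×m unitary matrices W2, Q2, and diagonal n×n matrices C ≥ 0, S ≥ 0 with nonnegative diagonal entries satisfying C² + S² = I_n, such that U = diag(W1, W2) · M · diag(Q1†, Q2†), where M is the (n+m)×(n+m) block matrix with first block row (C, −S, 0), second block row (S, C, 0), and third block row (0, 0, I_{m−n}) (the columns partitioned as n, n, m−n and the rows partitioned as n, n, m−n).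 -/
/-!
Diagonalize `U₁₁ U₁₁ᴴ = W₁ C² W₁ᴴ`. Since the first block row of `U` has orthonormal rows,
`U₁₂ U₁₂ᴴ = 1 - U₁₁ U₁₁ᴴ = W₁ S² W₁ᴴ` with `C² + S² = 1`. Two matrices with the same Gram matrix
`X Xᴴ = Y Yᴴ` differ by a unitary right factor (extend the isometry `Xᴴ v ↦ Yᴴ v` of the range of
`Xᴴ`), which gives unitaries `Q₁, Q₂` with `W₁ᴴ U₁₁ Q₁ = C` and `W₁ᴴ U₁₂ Q₂ = [-S 0]`. Then
`diag(W₁, 1)ᴴ U diag(Q₁, Q₂)` is a unitary with the same first block row as the unitary CS matrix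
`M`, and two unitaries with the same first block row differ by a left factor `diag(1, W₂)`.
-/

open Matrix

theorem LinearIsometry.exists_comp_eq_of_norm_eq {𝕜 V E : Type*} [RCLike 𝕜] [AddCommGroup V]
    [Module 𝕜 V] [NormedAddCommGroup E] [InnerProductSpace 𝕜 E] [FiniteDimensional 𝕜 E]
    (f g : V →ₗ[𝕜] E) (h : ∀ v, ‖g v‖ = ‖f v‖) : ∃ L : E →ₗᵢ[𝕜] E, ∀ v, L (f v) = g v := by
  have hker : LinearMap.ker f ≤ LinearMap.ker g := fun v hv => by
    rw [LinearMap.mem_ker] at hv ⊢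
    rw [← norm_eq_zero, h, hv, norm_zero]
  let L₁ : LinearMap.range f →ₗ[𝕜] E :=
    (LinearMap.ker f).liftQ g hker ∘ₗ f.quotKerEquivRange.symm.toLinearMap
  have hL₁ : ∀ v, L₁ ⟨f v, LinearMap.mem_range_self f v⟩ = g v := fun v => by simp [L₁]
  let L₀ : LinearMap.range f →ₗᵢ[𝕜] E :=
    { toLinearMap := L₁
      norm_map' := by
        rintro ⟨_, v, rfl⟩
        exact (congrArg norm (hL₁ v)).trans (h v) }
  exact ⟨L₀.extend, fun v =>
    (L₀.extend_apply ⟨f v, LinearMap.mem_range_self f v⟩).trans (hL₁ v)⟩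

namespace Matrix

theorem mul_mul_conjTranspose_mul_self {α l m n : Type*} [CommSemiring α] [StarRing α]
    [Fintype m] [Fintype n] (W : Matrix l m α) (F : Matrix m n α) :
    W * F * (W * F)ᴴ = W * (F * Fᴴ) * Wᴴ := by
  simp only [conjTranspose_mul, Matrix.mul_assoc]

theorem fromBlocks_submatrix_sumCongr {α l m n o l' m' n' o' : Type*} (A : Matrix n l α)
    (B : Matrix n m α) (C : Matrix o l α) (D : Matrix o m α) (f : n' ≃ n) (g : o' ≃ o)
    (h : l' ≃ l) (k : m' ≃ m) :
    (fromBlocks A B C D).submatrix (f.sumCongr g) (h.sumCongr k) =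
      fromBlocks (A.submatrix f h) (B.submatrix f k) (C.submatrix g h) (D.submatrix g k) := by
  ext (i | i) (j | j) <;> rfl

section Unitary

variable {R m n : Type*} [CommRing R] [StarRing R] [Fintype m] [DecidableEq m] [Fintype n]
  [DecidableEq n]

theorem submatrix_mem_unitaryGroup {U : Matrix n n R} (hU : U ∈ unitaryGroup n R) (e : m ≃ n) :
    U.submatrix e e ∈ unitaryGroup m R := by
  rw [mem_unitaryGroup_iff, star_eq_conjTranspose, conjTranspose_submatrix, submatrix_mul_equiv,
    ← star_eq_conjTranspose, Unitary.mul_star_self_of_mem hU, submatrix_one_equiv]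

theorem fromBlocks_mem_unitaryGroup {X : Matrix m m R} {Y : Matrix n n R}
    (hX : X ∈ unitaryGroup m R) (hY : Y ∈ unitaryGroup n R) :
    fromBlocks X 0 0 Y ∈ unitaryGroup (m ⊕ n) R := by
  rw [mem_unitaryGroup_iff, star_eq_conjTranspose, fromBlocks_conjTranspose, fromBlocks_multiply]
  simp [← star_eq_conjTranspose, Unitary.mul_star_self_of_mem hX, Unitary.mul_star_self_of_mem hY]

/-- With `V = fromBlocks A B C D` and `M = fromBlocks A B C' D'`, the product `V * star M` has
first block row `(1, 0)` because `V` and `M` share their first block row and `M` is unitary, and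
first block column `(1, 0)ᵀ` because `V` is unitary. -/
theorem exists_mem_unitaryGroup_eq_fromBlocks_one_mul {A : Matrix m m R} {B : Matrix m n R}
    {C C' : Matrix n m R} {D D' : Matrix n n R}
    (hV : fromBlocks A B C D ∈ unitaryGroup (m ⊕ n) R)
    (hM : fromBlocks A B C' D' ∈ unitaryGroup (m ⊕ n) R) :
    ∃ W ∈ unitaryGroup n R, fromBlocks A B C D = fromBlocks 1 0 0 W * fromBlocks A B C' D' := by
  have hV' := mem_unitaryGroup_iff.mp hV
  have hM' := mem_unitaryGroup_iff.mp hM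
  simp only [star_eq_conjTranspose, fromBlocks_conjTranspose, fromBlocks_multiply,
    ← fromBlocks_one, fromBlocks_inj] at hV' hM'
  set W := C * C'ᴴ + D * D'ᴴ
  have hVM : fromBlocks A B C D * star (fromBlocks A B C' D') = fromBlocks 1 0 0 W := by
    rw [star_eq_conjTranspose, fromBlocks_conjTranspose, fromBlocks_multiply, hV'.1, hV'.2.2.1,
      hM'.2.1]
  have hVMu : fromBlocks (1 : Matrix m m R) 0 0 W ∈ unitaryGroup (m ⊕ n) R :=
    hVM ▸ mul_mem hV (Unitary.star_mem hM)
  refine ⟨W, ?_, ?_⟩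
  · have hW := mem_unitaryGroup_iff.mp hVMu
    simp only [star_eq_conjTranspose, fromBlocks_conjTranspose, fromBlocks_multiply,
      ← fromBlocks_one, fromBlocks_inj] at hW
    exact mem_unitaryGroup_iff.mpr (by simpa [star_eq_conjTranspose] using hW.2.2.2)
  · rw [← hVM, mul_assoc, Unitary.star_mul_self_of_mem hM, mul_one]

end Unitary

section RCLike

variable {𝕜 : Type*} [RCLike 𝕜]

theorem conjTranspose_diagonal_ofReal {p : Type*} [DecidableEq p] (d : p → ℝ) :
    (diagonal fun i => (d i : 𝕜))ᴴ = diagonal fun i => (d i : 𝕜) := by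
  simp [diagonal_conjTranspose, Pi.star_def]

theorem exists_mem_unitaryGroup_mul_eq_of_mul_conjTranspose_eq {ι κ : Type*} [Fintype ι]
    [DecidableEq ι] [Fintype κ] [DecidableEq κ] {X Y : Matrix ι κ 𝕜} (h : X * Xᴴ = Y * Yᴴ) :
    ∃ Q ∈ unitaryGroup κ 𝕜, X * Q = Y := by
  have hnorm : ∀ v, ‖toEuclideanLin Yᴴ v‖ = ‖toEuclideanLin Xᴴ v‖ := fun v => by
    simp only [norm_eq_sqrt_re_inner (𝕜 := 𝕜), ← LinearMap.adjoint_inner_right,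
      ← toEuclideanLin_conjTranspose_eq_adjoint, conjTranspose_conjTranspose,
      ← LinearMap.comp_apply, ← toLpLin_mul_same, h]
  obtain ⟨L, hL⟩ := LinearIsometry.exists_comp_eq_of_norm_eq _ _ hnorm
  set Q := (toEuclideanLin (m := κ) (n := κ)).symm L.toLinearMap
  have hQ : toEuclideanLin Q = L.toLinearMap := LinearEquiv.apply_symm_apply _ _
  have hQQ : Qᴴ * Q = 1 := toEuclideanLin.injective <| by
    rw [toLpLin_mul_same, toEuclideanLin_conjTranspose_eq_adjoint, hQ,
      LinearIsometry.adjoint_comp_self', toLpLin_one]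
  have hQX : Q * Xᴴ = Yᴴ := toEuclideanLin.injective <| LinearMap.ext fun v => by
    rw [toLpLin_mul_same, LinearMap.comp_apply, hQ]
    exact hL v
  refine ⟨Qᴴ, ?_, ?_⟩
  · rw [mem_unitaryGroup_iff, star_eq_conjTranspose, conjTranspose_conjTranspose, hQQ]
  · rw [← conjTranspose_conjTranspose X, ← conjTranspose_mul, hQX, conjTranspose_conjTranspose]

section CS

variable {p r : Type*} [DecidableEq p] [DecidableEq r]

def csMatrix (c s : p → ℝ) : Matrix (p ⊕ (p ⊕ r)) (p ⊕ (p ⊕ r)) 𝕜 :=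
  fromBlocks (diagonal fun i => (c i : 𝕜)) (fromCols (-diagonal fun i => (s i : 𝕜)) 0)
    (fromRows (diagonal fun i => (s i : 𝕜)) 0) (fromBlocks (diagonal fun i => (c i : 𝕜)) 0 0 1)

theorem csMatrix_eq_submatrix (c s : p → ℝ) :
    (csMatrix c s : Matrix (p ⊕ (p ⊕ r)) (p ⊕ (p ⊕ r)) 𝕜) =
      (fromBlocks (fromBlocks (diagonal fun i => (c i : 𝕜)) (-diagonal fun i => (s i : 𝕜))
        (diagonal fun i => (s i : 𝕜)) (diagonal fun i => (c i : 𝕜))) 0 0 1).submatrix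
        (Equiv.sumAssoc p p r).symm (Equiv.sumAssoc p p r).symm := by
  ext (i | i | i) (j | j | j) <;> rfl

variable [Fintype p] [Fintype r]

theorem fromBlocks_diagonal_neg_diagonal_mem_unitaryGroup {c s : p → ℝ}
    (hcs : ∀ i, c i ^ 2 + s i ^ 2 = 1) :
    fromBlocks (diagonal fun i => (c i : 𝕜)) (-diagonal fun i => (s i : 𝕜))
      (diagonal fun i => (s i : 𝕜)) (diagonal fun i => (c i : 𝕜)) ∈ unitaryGroup (p ⊕ p) 𝕜 := by
  have hcs' : ∀ i, (c i : 𝕜) * c i + s i * s i = 1 := fun i => by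
    exact_mod_cast (by rw [← sq, ← sq, hcs i] : (c i * c i + s i * s i : ℝ) = 1)
  have hsc' : ∀ i, (s i : 𝕜) * s i + c i * c i = 1 := fun i => by rw [add_comm, hcs']
  have hcomm : ∀ i, (s i : 𝕜) * c i = c i * s i := fun i => mul_comm _ _
  rw [mem_unitaryGroup_iff, star_eq_conjTranspose, fromBlocks_conjTranspose, ← fromBlocks_one]
  simp only [conjTranspose_diagonal_ofReal, conjTranspose_neg, fromBlocks_multiply, mul_neg,
    neg_mul, neg_neg, diagonal_mul_diagonal, diagonal_add, hcs', hsc', hcomm, add_neg_cancel,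
    diagonal_one]

theorem csMatrix_mem_unitaryGroup {c s : p → ℝ} (hcs : ∀ i, c i ^ 2 + s i ^ 2 = 1) :
    (csMatrix c s : Matrix (p ⊕ (p ⊕ r)) (p ⊕ (p ⊕ r)) 𝕜) ∈ unitaryGroup (p ⊕ (p ⊕ r)) 𝕜 := by
  rw [csMatrix_eq_submatrix]
  exact submatrix_mem_unitaryGroup (fromBlocks_mem_unitaryGroup
    (fromBlocks_diagonal_neg_diagonal_mem_unitaryGroup hcs) (one_mem _)) _

open scoped ComplexOrder in
theorem exists_csDecomposition_of_mul_conjTranspose_add_eq_one (A : Matrix p p 𝕜)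
    (B : Matrix p (p ⊕ r) 𝕜) (h : A * Aᴴ + B * Bᴴ = 1) :
    ∃ W ∈ unitaryGroup p 𝕜, ∃ Q₁ ∈ unitaryGroup p 𝕜, ∃ Q₂ ∈ unitaryGroup (p ⊕ r) 𝕜,
      ∃ c s : p → ℝ, (∀ i, 0 ≤ c i) ∧ (∀ i, 0 ≤ s i) ∧ (∀ i, c i ^ 2 + s i ^ 2 = 1) ∧
        star W * A * Q₁ = diagonal (fun i => (c i : 𝕜)) ∧
        star W * B * Q₂ = fromCols (-diagonal fun i => (s i : 𝕜)) 0 := by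
  have hH := isHermitian_mul_conjTranspose_self A
  set W : Matrix p p 𝕜 := (hH.eigenvectorUnitary : Matrix p p 𝕜)
  have hW : W ∈ unitaryGroup p 𝕜 := hH.eigenvectorUnitary.2
  set μ := hH.eigenvalues
  have hAA : A * Aᴴ = W * diagonal (fun i => (μ i : 𝕜)) * star W := hH.spectral_theorem
  have hBB : B * Bᴴ = W * diagonal (fun i => ((1 - μ i : ℝ) : 𝕜)) * star W := by
    rw [eq_sub_of_add_eq' h, hAA]
    push_cast
    rw [← diagonal_one, ← diagonal_sub, diagonal_one, mul_sub, sub_mul, mul_one,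
      Unitary.mul_star_self_of_mem hW]
  have hμ : ∀ i, 0 ≤ μ i := (posSemidef_self_mul_conjTranspose A).eigenvalues_nonneg
  have hμ' : ∀ i, 0 ≤ 1 - μ i := by
    have hpsd := (posSemidef_self_mul_conjTranspose B).conjTranspose_mul_mul_same W
    rw [hBB, ← star_eq_conjTranspose, ← mul_assoc, ← mul_assoc, Unitary.star_mul_self_of_mem hW,
      one_mul, mul_assoc, Unitary.star_mul_self_of_mem hW, mul_one, posSemidef_diagonal_iff] at hpsd
    exact fun i => RCLike.ofReal_nonneg.mp (hpsd i)
  obtain ⟨Q₁, hQ₁, hAQ⟩ := exists_mem_unitaryGroup_mul_eq_of_mul_conjTranspose_eq (X := A)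
      (Y := W * diagonal fun i => ((√(μ i) : ℝ) : 𝕜)) <| by
    rw [mul_mul_conjTranspose_mul_self, hAA, star_eq_conjTranspose, conjTranspose_diagonal_ofReal,
      diagonal_mul_diagonal]
    simp_rw [← RCLike.ofReal_mul, Real.mul_self_sqrt (hμ _)]
  obtain ⟨Q₂, hQ₂, hBQ⟩ := exists_mem_unitaryGroup_mul_eq_of_mul_conjTranspose_eq (X := B)
      (Y := W * fromCols (-diagonal fun i => ((√(1 - μ i) : ℝ) : 𝕜)) 0) <| by
    rw [mul_mul_conjTranspose_mul_self, hBB, star_eq_conjTranspose,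
      conjTranspose_fromCols_eq_fromRows_conjTranspose, fromCols_mul_fromRows, conjTranspose_neg,
      conjTranspose_diagonal_ofReal, neg_mul_neg, diagonal_mul_diagonal]
    simp only [← RCLike.ofReal_mul, Real.mul_self_sqrt (hμ' _), conjTranspose_zero,
      Matrix.mul_zero, add_zero]
  refine ⟨W, hW, Q₁, hQ₁, Q₂, hQ₂, fun i => √(μ i), fun i => √(1 - μ i),
    fun i => Real.sqrt_nonneg _, fun i => Real.sqrt_nonneg _, fun i => ?_, ?_, ?_⟩
  · rw [Real.sq_sqrt (hμ i), Real.sq_sqrt (hμ' i), add_sub_cancel]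
  · rw [Matrix.mul_assoc, hAQ, ← Matrix.mul_assoc, Unitary.star_mul_self_of_mem hW, Matrix.one_mul]
  · rw [Matrix.mul_assoc, hBQ, ← Matrix.mul_assoc, Unitary.star_mul_self_of_mem hW, Matrix.one_mul]

theorem exists_csDecomposition {U : Matrix (p ⊕ (p ⊕ r)) (p ⊕ (p ⊕ r)) 𝕜}
    (hU : U ∈ unitaryGroup (p ⊕ (p ⊕ r)) 𝕜) :
    ∃ W₁ ∈ unitaryGroup p 𝕜, ∃ Q₁ ∈ unitaryGroup p 𝕜, ∃ W₂ ∈ unitaryGroup (p ⊕ r) 𝕜,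
      ∃ Q₂ ∈ unitaryGroup (p ⊕ r) 𝕜, ∃ c s : p → ℝ,
        (∀ i, 0 ≤ c i) ∧ (∀ i, 0 ≤ s i) ∧ (∀ i, c i ^ 2 + s i ^ 2 = 1) ∧
        U = fromBlocks W₁ 0 0 W₂ * csMatrix c s * fromBlocks Q₁ᴴ 0 0 Q₂ᴴ := by
  obtain ⟨A, B, C, D, rfl⟩ : ∃ A B C D, U = fromBlocks A B C D :=
    ⟨_, _, _, _, (fromBlocks_toBlocks U).symm⟩
  have hrow : A * Aᴴ + B * Bᴴ = 1 := by
    have h := mem_unitaryGroup_iff.mp hU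
    rw [star_eq_conjTranspose, fromBlocks_conjTranspose, fromBlocks_multiply, ← fromBlocks_one,
      fromBlocks_inj] at h
    exact h.1
  obtain ⟨W₁, hW₁, Q₁, hQ₁, Q₂, hQ₂, c, s, hc, hs, hcs, hAQ, hBQ⟩ :=
    exists_csDecomposition_of_mul_conjTranspose_add_eq_one A B hrow
  have hV : fromBlocks (star W₁) 0 0 1 * fromBlocks A B C D * fromBlocks Q₁ 0 0 Q₂ =
      fromBlocks (diagonal fun i => (c i : 𝕜)) (fromCols (-diagonal fun i => (s i : 𝕜)) 0)
        (C * Q₁) (D * Q₂) := by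
    simp [fromBlocks_multiply, hAQ, hBQ]
  obtain ⟨W₂, hW₂, hVW⟩ := exists_mem_unitaryGroup_eq_fromBlocks_one_mul
    (hV ▸ mul_mem (mul_mem (fromBlocks_mem_unitaryGroup (Unitary.star_mem hW₁) (one_mem _)) hU)
      (fromBlocks_mem_unitaryGroup hQ₁ hQ₂))
    (csMatrix_mem_unitaryGroup (r := r) hcs)
  have hL : fromBlocks W₁ 0 0 1 * fromBlocks (star W₁) 0 0 1 =
      (1 : Matrix (p ⊕ (p ⊕ r)) (p ⊕ (p ⊕ r)) 𝕜) := by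
    simp [fromBlocks_multiply, Unitary.mul_star_self_of_mem hW₁]
  have hR : fromBlocks Q₁ 0 0 Q₂ * fromBlocks Q₁ᴴ 0 0 Q₂ᴴ = 1 := by
    simp [fromBlocks_multiply, ← star_eq_conjTranspose, Unitary.mul_star_self_of_mem hQ₁,
      Unitary.mul_star_self_of_mem hQ₂]
  refine ⟨W₁, hW₁, Q₁, hQ₁, W₂, hW₂, Q₂, hQ₂, c, s, hc, hs, hcs, ?_⟩
  calc fromBlocks A B C D
      = fromBlocks W₁ 0 0 1 * (fromBlocks (star W₁) 0 0 1 * fromBlocks A B C D *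
          fromBlocks Q₁ 0 0 Q₂) * fromBlocks Q₁ᴴ 0 0 Q₂ᴴ := by
        rw [← mul_assoc, ← mul_assoc, hL, one_mul, mul_assoc, hR, mul_one]
    _ = fromBlocks W₁ 0 0 W₂ * csMatrix c s * fromBlocks Q₁ᴴ 0 0 Q₂ᴴ := by
        rw [hV, hVW, ← mul_assoc (fromBlocks W₁ 0 0 1), fromBlocks_multiply]
        simp only [Matrix.mul_one, Matrix.one_mul, Matrix.mul_zero, Matrix.zero_mul, add_zero,
          zero_add]
        rfl

end CS

end RCLike

end Matrix

/-- (CS decomposition) Let `U` be a unitary complex matrix partitioned into blocks with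
row/column index type `Fin n ⊕ Fin m` (so `U₁₁` is `n × n`, `U₂₂` is `m × m`), and suppose
`m ≥ n`.  Then there exist `n × n` unitaries `W₁, Q₁`, `m × m` unitaries `W₂, Q₂`, and
nonnegative diagonal data `C, S : Fin n → ℝ` with `C i ^ 2 + S i ^ 2 = 1`, such that
`U = diag(W₁, W₂) * M * diag(Q₁ᴴ, Q₂ᴴ)`, where `M` is the block matrix with block rows
`(C, -S, 0)`, `(S, C, 0)`, `(0, 0, I_{m-n})` (rows and columns partitioned as
`n, n, m - n`), transported to the index type `Fin n ⊕ Fin m` along the canonical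
identification `Fin m ≃ Fin n ⊕ Fin (m - n)`. -/
theorem cs_decomposition {n m : ℕ} (hnm : n ≤ m)
    (U : Matrix (Fin n ⊕ Fin m) (Fin n ⊕ Fin m) ℂ) (hU : U * Uᴴ = 1) :
    ∃ (W₁ Q₁ : Matrix (Fin n) (Fin n) ℂ) (W₂ Q₂ : Matrix (Fin m) (Fin m) ℂ)
      (C S : Fin n → ℝ),
      W₁ * W₁ᴴ = 1 ∧ Q₁ * Q₁ᴴ = 1 ∧ W₂ * W₂ᴴ = 1 ∧ Q₂ * Q₂ᴴ = 1 ∧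
      (∀ i, 0 ≤ C i) ∧ (∀ i, 0 ≤ S i) ∧ (∀ i, C i ^ 2 + S i ^ 2 = 1) ∧
      U = fromBlocks W₁ 0 0 W₂ *
          (reindex
            ((Equiv.refl (Fin n)).sumCongr
              ((finCongr (Nat.add_sub_cancel' hnm).symm).trans finSumFinEquiv.symm)).symm
            ((Equiv.refl (Fin n)).sumCongr
              ((finCongr (Nat.add_sub_cancel' hnm).symm).trans finSumFinEquiv.symm)).symm
            (fromBlocks
              (diagonal fun i => (C i : ℂ))
              (fromCols (-(diagonal fun i => (S i : ℂ))) 0)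
              (fromRows (diagonal fun i => (S i : ℂ)) 0)
              (fromBlocks (diagonal fun i => (C i : ℂ)) 0 0
                (1 : Matrix (Fin (m - n)) (Fin (m - n)) ℂ)))) *
          fromBlocks Q₁ᴴ 0 0 Q₂ᴴ := by
  set σ : Fin m ≃ Fin n ⊕ Fin (m - n) :=
    (finCongr (Nat.add_sub_cancel' hnm).symm).trans finSumFinEquiv.symm
  set e := (Equiv.refl (Fin n)).sumCongr σ
  obtain ⟨W₁, hW₁, Q₁, hQ₁, W₂, hW₂, Q₂, hQ₂, c, s, hc, hs, hcs, hdecomp⟩ :=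
    exists_csDecomposition (submatrix_mem_unitaryGroup (mem_unitaryGroup_iff.mpr hU) e.symm)
  refine ⟨W₁, Q₁, W₂.submatrix σ σ, Q₂.submatrix σ σ, c, s,
    mem_unitaryGroup_iff.mp hW₁, mem_unitaryGroup_iff.mp hQ₁,
    mem_unitaryGroup_iff.mp (submatrix_mem_unitaryGroup hW₂ σ),
    mem_unitaryGroup_iff.mp (submatrix_mem_unitaryGroup hQ₂ σ), hc, hs, hcs, ?_⟩
  calc U = (U.submatrix e.symm e.symm).submatrix e e := by simp
    _ = (fromBlocks W₁ 0 0 W₂).submatrix e e * (csMatrix c s).submatrix e e *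
          (fromBlocks Q₁ᴴ 0 0 Q₂ᴴ).submatrix e e := by
      rw [hdecomp, submatrix_mul_equiv, submatrix_mul_equiv]
    _ = _ := by
      simp only [e, fromBlocks_submatrix_sumCongr, Equiv.coe_refl, submatrix_id_id, submatrix_zero,
        conjTranspose_submatrix]
      -- the middle factor of the statement unfolds to `(csMatrix c s).submatrix e e`
      rfl
end
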